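/- arXiv:math/0607760 — 6 statements merged into one kernel-verified Lean document; each statement's English description precedes it below -/
import Mathlib

section
/- With σ satisfying σ^{q−1} = −x, one has |σ^q/D_1 − σ| ≤ q^{−1/(q−1) − (q−1)}. -/
/-- with `σ^{q-1} = -x` and `D_1 = [1] = x^q - x`,
`|σ^q / D_1 - σ| ≤ q^{-1/(q-1) - (q-1)}`. -/
theorem dwork_carlitz_first_coeff_bound {C : Type*} [NormedField C]
    (hna : IsNonarchimedean (‖·‖ : C → ℝ))
    (q : ℕ) (p m : ℕ) (hp : p.Prime) (hm : 0 < m) (hqpm : q = p ^ m) (hq : 1 < q)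
    (x : C) (hx : ‖x‖ = (q : ℝ)⁻¹)
    (σ : C) (hσ : σ ^ (q - 1) = -x) :
    ‖σ ^ q / (x ^ q - x) - σ‖ ≤
      (q : ℝ) ^ (-(1 / ((q : ℝ) - 1)) - ((q : ℝ) - 1)) := by
  have hQ1 : (1:ℝ) < (q:ℝ) := by exact_mod_cast hq
  have hQ0 : (0:ℝ) < (q:ℝ) := by linarith
  have hcast : ((q - 1 : ℕ) : ℝ) = (q:ℝ) - 1 := by
    rw [Nat.cast_sub hq.le]; norm_num
  have hxpos : (0:ℝ) < ‖x‖ := by rw [hx]; positivity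
  have hx0 : x ≠ 0 := by
    intro h; rw [h, norm_zero] at hxpos; exact lt_irrefl _ hxpos
  -- ‖x^q‖ < ‖x‖
  have hlt : ‖x ^ q‖ < ‖x‖ := by
    rw [norm_pow, hx]
    have h1 : ((q:ℝ))⁻¹ < 1 := by
      rw [inv_lt_one_iff₀]; right; exact hQ1
    have h0 : (0:ℝ) < ((q:ℝ))⁻¹ := by positivity
    calc ((q:ℝ))⁻¹ ^ q < ((q:ℝ))⁻¹ ^ 1 := pow_lt_pow_right_of_lt_one₀ h0 h1 hq
      _ = ((q:ℝ))⁻¹ := pow_one _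
  -- ‖x^q - x‖ = ‖x‖
  have hd : ‖x ^ q - x‖ = ‖x‖ := by
    apply le_antisymm
    · have h := hna (x ^ q) (-x)
      simp only [norm_neg] at h
      rw [sub_eq_add_neg]
      exact h.trans (max_le hlt.le le_rfl)
    · by_contra h
      push_neg at h
      have h2 : ‖x‖ ≤ max ‖x ^ q‖ ‖x ^ q - x‖ := by
        have h3 := hna (x ^ q) (-(x ^ q - x))
        simp only [norm_neg] at h3
        simpa using h3
      rcases max_cases ‖x ^ q‖ ‖x ^ q - x‖ with ⟨he, _⟩ | ⟨he, _⟩ <;> rw [he] at h2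
      · linarith
      · linarith
  have hd0 : x ^ q - x ≠ 0 := by
    intro h; rw [h, norm_zero] at hd; linarith
  -- σ^q = -x * σ
  have hσq : σ ^ q = -x * σ := by
    have h5 : σ ^ q = σ ^ (q - 1) * σ := by
      rw [← pow_succ]; congr 1; omega
    rw [h5, hσ]
  -- rewrite the expression
  have hexpr : σ ^ q / (x ^ q - x) - σ = -(σ * x ^ q) / (x ^ q - x) := by
    field_simp
    rw [hσq]; ring
  -- ‖σ‖
  have hσpow : ‖σ‖ ^ (q - 1) = ((q:ℝ))⁻¹ := by
    rw [← norm_pow, hσ, norm_neg, hx]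
  have hQm1 : (q:ℝ) - 1 ≠ 0 := by linarith
  have hσnorm : ‖σ‖ = (q:ℝ) ^ (-(1 / ((q:ℝ) - 1))) := by
    have h1 : ‖σ‖ = (((q:ℝ))⁻¹) ^ (((q:ℝ) - 1)⁻¹ : ℝ) := by
      rw [← hσpow, ← Real.rpow_natCast ‖σ‖ (q - 1), ← Real.rpow_mul (norm_nonneg σ),
        hcast, mul_inv_cancel₀ hQm1, Real.rpow_one]
    rw [h1, Real.inv_rpow hQ0.le, ← Real.rpow_neg hQ0.le, one_div]
  -- put it together
  rw [hexpr, norm_div, norm_neg, norm_mul, norm_pow, hd, hx, hσnorm]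
  have hpow : (((q:ℝ))⁻¹) ^ q = (q:ℝ) ^ (-(q:ℝ)) := by
    rw [← Real.rpow_natCast (((q:ℝ))⁻¹) q, Real.inv_rpow hQ0.le, ← Real.rpow_neg hQ0.le]
  rw [hpow, div_eq_mul_inv, inv_inv]
  apply le_of_eq
  rw [show (-(1 / ((q:ℝ) - 1)) - ((q:ℝ) - 1)) = (-(1 / ((q:ℝ) - 1)) + -(q:ℝ) + 1) by ring,
    Real.rpow_add hQ0, Real.rpow_add hQ0, Real.rpow_one]
end

section
/- For every n ≥ 0, |σ^{q^n}/D_n| = q^{−1/(q−1)}, where σ^{q−1} = −x and D_n is the Carlitz factorial. -/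
/-!
Since `‖x‖ < 1`, the ultrametric inequality gives `‖x ^ q ^ (n + 1) - x‖ = ‖x‖`, so by induction
`‖D n‖ = ‖x‖ ^ (1 + q + ⋯ + q ^ (n - 1))`. As `‖x‖ = ‖σ‖ ^ (q - 1)` and
`(q - 1) (1 + q + ⋯ + q ^ (n - 1)) = q ^ n - 1`, the quotient has norm `‖σ‖`, which is the
`(q - 1)`-th root of `q⁻¹`.
-/

open Finset

lemma eq_rpow_neg_inv_of_pow_eq_inv {r a : ℝ} {k : ℕ} (hr : 0 ≤ r) (ha : 0 ≤ a) (hk : k ≠ 0)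
    (h : r ^ k = a⁻¹) : r = a ^ (-(1 / (k : ℝ))) := by
  rw [← Real.pow_rpow_inv_natCast hr hk, h, Real.inv_rpow ha, ← Real.rpow_neg ha, one_div]

section Ultrametric

variable {C : Type*} [NormedField C] [IsUltrametricDist C]

lemma norm_pow_sub_self {x : C} (hx0 : 0 < ‖x‖) (hx1 : ‖x‖ < 1) {k : ℕ} (hk : 1 < k) :
    ‖x ^ k - x‖ = ‖x‖ := by
  have hlt : ‖x ^ k‖ < ‖-x‖ := by
    rw [norm_pow, norm_neg]
    exact pow_lt_self_of_lt_one₀ hx0 hx1 hk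
  rw [sub_eq_add_neg, IsUltrametricDist.norm_add_eq_max_of_norm_ne_norm hlt.ne,
    max_eq_right hlt.le, norm_neg]

lemma norm_eq_pow_geom_sum_of_carlitz_rec {q : ℕ} (hq : 1 < q) {x : C} (hx0 : 0 < ‖x‖)
    (hx1 : ‖x‖ < 1) {D : ℕ → C} (hD0 : D 0 = 1)
    (hD : ∀ n : ℕ, D (n + 1) = (x ^ q ^ (n + 1) - x) * D n ^ q) (n : ℕ) :
    ‖D n‖ = ‖x‖ ^ ∑ i ∈ range n, q ^ i := by
  induction n with
  | zero => simp [hD0]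
  | succ n ih =>
    rw [hD, norm_mul, norm_pow_sub_self hx0 hx1 (Nat.one_lt_pow n.succ_ne_zero hq), norm_pow, ih,
      ← pow_mul, ← pow_succ', geom_sum_succ, mul_comm]

end Ultrametric

theorem sigma_pow_div_D_abs_general {C : Type*} [NormedField C]
    (hna : IsNonarchimedean (‖·‖ : C → ℝ))
    (q : ℕ) (hq : 1 < q)
    (x : C) (hx : ‖x‖ = (q : ℝ)⁻¹)
    (σ : C) (hσ : σ ^ (q - 1) = -x)
    (D : ℕ → C) (hD0 : D 0 = 1)
    (hD : ∀ n : ℕ, D (n + 1) = (x ^ q ^ (n + 1) - x) * (D n) ^ q) :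
    ∀ n : ℕ, ‖σ ^ q ^ n / D n‖ = (q : ℝ) ^ (-(1 / ((q : ℝ) - 1))) := by
  intro n
  have := IsUltrametricDist.isUltrametricDist_of_isNonarchimedean_norm hna
  have hq' : (1 : ℝ) < q := by exact_mod_cast hq
  have hx0 : 0 < ‖x‖ := by rw [hx]; positivity
  have hx1 : ‖x‖ < 1 := by rw [hx]; exact inv_lt_one_of_one_lt₀ hq'
  have hσx : ‖σ‖ ^ (q - 1) = ‖x‖ := by rw [← norm_pow, hσ, norm_neg]
  have hσ0 : ‖σ‖ ≠ 0 := fun h0 => by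
    rw [h0, zero_pow (by omega)] at hσx
    exact hx0.ne hσx
  have hqn : q ^ n = (∑ i ∈ range n, q ^ i) * (q - 1) + 1 := by
    have h := geom_sum_mul_add (q - 1) n
    rwa [Nat.sub_add_cancel hq.le, eq_comm] at h
  calc ‖σ ^ q ^ n / D n‖ = ‖σ‖ ^ q ^ n / ‖x‖ ^ ∑ i ∈ range n, q ^ i := by
        rw [norm_div, norm_pow, norm_eq_pow_geom_sum_of_carlitz_rec hq hx0 hx1 hD0 hD]
    _ = ‖σ‖ := by
        rw [hqn, ← hσx, ← pow_mul', pow_succ, mul_div_cancel_left₀ _ (pow_ne_zero _ hσ0)]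
    _ = (q : ℝ) ^ (-(1 / ((q : ℝ) - 1))) := by
        rw [← Nat.cast_pred (by omega)]
        exact eq_rpow_neg_inv_of_pow_eq_inv (norm_nonneg σ) (by positivity) (by omega)
          (hσx.trans hx)

/-- with `σ^{q-1} = -x` and `D_n` the Carlitz factorial,
`|σ^{q^n}/D_n| = q^{-1/(q-1)}` for every `n ≥ 0`. -/
theorem sigma_pow_div_D_abs {C : Type*} [NormedField C]
    (hna : IsNonarchimedean (‖·‖ : C → ℝ))
    (q : ℕ) (p m : ℕ) (hp : p.Prime) (hm : 0 < m) (hqpm : q = p ^ m) (hq : 1 < q)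
    (x : C) (hx : ‖x‖ = (q : ℝ)⁻¹)
    (σ : C) (hσ : σ ^ (q - 1) = -x)
    (D : ℕ → C) (hD0 : D 0 = 1)
    (hD : ∀ n : ℕ, D (n + 1) = (x ^ q ^ (n + 1) - x) * (D n) ^ q) :
    ∀ n : ℕ, ‖σ ^ q ^ n / D n‖ = (q : ℝ) ^ (-(1 / ((q : ℝ) - 1))) :=
  sigma_pow_div_D_abs_general hna q hq x hx σ hσ D hD0 hD
end

section
/- The limit E(1) = lim_{n→∞} σ^{q^n}/D_n satisfies E(1)^q = −x·E(1), and hence E(1)^{q−1} = −x (since E(1) ≠ 0, as |E(1)| = q^{−1/(q−1)}). -/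
/-!
Write `e n = σ^{q^n} / D n`. The recursion for `D` gives `e n ^ q = [n+1] · e (n+1)` with
`[n+1] = x^{q^{n+1}} - x → -x`, so passing to the limit yields `E(1)^q = -x E(1)`. Since
`|[n+1]| = |x|` in the ultrametric field and `|σ|^q = |x| |σ|`, the same identity shows that
`|e n| = |σ|` for every `n`; hence `|E(1)| = |σ| = q^{-1/(q-1)}`, so `E(1) ≠ 0` and one
factor `E(1)` can be cancelled.
-/

open Filter Topology

lemma pow_sub_one_eq_iff_pow_eq_mul {M₀ : Type*} [MonoidWithZero M₀] [IsRightCancelMulZero M₀]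
    {a b : M₀} {q : ℕ} (ha : a ≠ 0) (hq : q ≠ 0) : a ^ (q - 1) = b ↔ a ^ q = b * a := by
  rw [← pow_sub_one_mul hq, mul_left_inj' ha]

lemma Real.eq_rpow_neg_inv_of_pow_eq_inv {a t : ℝ} {n : ℕ} (ha : 0 ≤ a) (ht : 0 ≤ t)
    (hn : n ≠ 0) (h : a ^ n = t⁻¹) : a = t ^ (-(1 / (n : ℝ))) := by
  rw [← Real.pow_rpow_inv_natCast ha hn, h, Real.inv_rpow ht, Real.rpow_neg ht, one_div]

lemma IsUltrametricDist.norm_pow_sub_self {K : Type*} [NormedDivisionRing K]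
    [IsUltrametricDist K] {x : K} (hx : ‖x‖ < 1) {k : ℕ} (hk : 1 < k) :
    ‖x ^ k - x‖ = ‖x‖ := by
  rcases eq_or_ne x 0 with rfl | hx0
  · simp [zero_pow (by omega : k ≠ 0)]
  have hlt : ‖x ^ k‖ < ‖-x‖ := by
    rw [norm_pow, norm_neg]
    exact pow_lt_self_of_lt_one₀ (norm_pos_iff.2 hx0) hx hk
  rw [sub_eq_add_neg, norm_add_eq_max_of_norm_ne_norm hlt.ne, max_eq_right hlt.le, norm_neg]

lemma tendsto_pow_pow_succ_sub_self {R : Type*} [NormedRing R] {x : R} (hx : ‖x‖ < 1) {q : ℕ}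
    (hq : 1 < q) : Tendsto (fun n : ℕ => x ^ q ^ (n + 1) - x) atTop (𝓝 (-x)) := by
  have hexp : Tendsto (fun n : ℕ => q ^ (n + 1)) atTop atTop :=
    (tendsto_pow_atTop_atTop_of_one_lt hq).comp (tendsto_add_atTop_nat 1)
  simpa using ((tendsto_pow_atTop_nhds_zero_of_norm_lt_one hx).comp hexp).sub_const x

lemma pow_eq_mul_of_tendsto {M : Type*} [TopologicalSpace M] [Monoid M] [ContinuousMul M]
    [T2Space M] {e c : ℕ → M} {L l : M} {q : ℕ} (he : Tendsto e atTop (𝓝 L))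
    (hc : Tendsto c atTop (𝓝 l)) (hrec : ∀ n, e n ^ q = c n * e (n + 1)) : L ^ q = l * L :=
  tendsto_nhds_unique (he.pow q) <| by
    simpa only [hrec] using hc.mul ((tendsto_add_atTop_iff_nat 1).2 he)

section CarlitzQuotient

variable {K : Type*} [NormedField K] {q : ℕ} {x σ : K} {D : ℕ → K}

lemma carlitz_quotient_pow (hD : ∀ n, D (n + 1) = (x ^ q ^ (n + 1) - x) * D n ^ q)
    {n : ℕ} (hbr : x ^ q ^ (n + 1) - x ≠ 0) :
    (σ ^ q ^ n / D n) ^ q = (x ^ q ^ (n + 1) - x) * (σ ^ q ^ (n + 1) / D (n + 1)) := by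
  rw [hD n, div_pow, ← pow_mul, ← pow_succ, ← mul_div_assoc, mul_div_mul_left _ _ hbr]

lemma norm_carlitz_quotient (hx : x ≠ 0) (hbr : ∀ n, ‖x ^ q ^ (n + 1) - x‖ = ‖x‖)
    (hσ : σ ^ q = -x * σ) (hD0 : D 0 = 1)
    (hD : ∀ n, D (n + 1) = (x ^ q ^ (n + 1) - x) * D n ^ q) (n : ℕ) :
    ‖σ ^ q ^ n / D n‖ = ‖σ‖ := by
  induction n with
  | zero => simp [hD0]
  | succ n ih =>
    have hbr0 : x ^ q ^ (n + 1) - x ≠ 0 := by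
      rw [← norm_ne_zero_iff, hbr n, norm_ne_zero_iff]; exact hx
    have key := congrArg norm (carlitz_quotient_pow (σ := σ) hD hbr0)
    rw [norm_pow, ih, norm_mul, hbr, ← norm_pow, hσ, norm_mul, norm_neg] at key
    exact (mul_left_cancel₀ (norm_ne_zero_iff.2 hx) key).symm

end CarlitzQuotient

theorem dwork_carlitz_special_value_eq_general {C : Type*} [NormedField C]
    (hna : IsNonarchimedean (‖·‖ : C → ℝ))
    (q : ℕ) (hq : 1 < q)
    (x : C) (hx : ‖x‖ = (q : ℝ)⁻¹)
    (σ : C) (hσ : σ ^ (q - 1) = -x)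
    (D : ℕ → C) (hD0 : D 0 = 1)
    (hD : ∀ n : ℕ, D (n + 1) = (x ^ q ^ (n + 1) - x) * (D n) ^ q)
    (E1 : C) (hE1 : Filter.Tendsto (fun n : ℕ => σ ^ q ^ n / D n) Filter.atTop (nhds E1)) :
    E1 ^ q = -x * E1 ∧ ‖E1‖ = (q : ℝ) ^ (-(1 / ((q : ℝ) - 1))) ∧ E1 ≠ 0 ∧
      E1 ^ (q - 1) = -x := by
  have := IsUltrametricDist.isUltrametricDist_of_isNonarchimedean_norm hna
  have hq0 : q ≠ 0 := by omega
  have hxlt : ‖x‖ < 1 := hx ▸ inv_lt_one_of_one_lt₀ (by exact_mod_cast hq)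
  have hx0 : x ≠ 0 := norm_pos_iff.1 (by rw [hx]; positivity)
  have hσ0 : σ ≠ 0 := by
    rintro rfl
    exact hx0 (by simpa [zero_pow (Nat.sub_ne_zero_of_lt hq)] using hσ)
  have hbr n : ‖x ^ q ^ (n + 1) - x‖ = ‖x‖ :=
    IsUltrametricDist.norm_pow_sub_self hxlt (Nat.one_lt_pow n.succ_ne_zero hq)
  have hbr0 n : x ^ q ^ (n + 1) - x ≠ 0 := by
    rw [← norm_ne_zero_iff, hbr n, norm_ne_zero_iff]; exact hx0
  have hσq : σ ^ q = -x * σ := (pow_sub_one_eq_iff_pow_eq_mul hσ0 hq0).1 hσ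
  have hnormE : ‖E1‖ = ‖σ‖ := tendsto_nhds_unique hE1.norm <| by
    simp only [norm_carlitz_quotient hx0 hbr hσq hD0 hD]
    exact tendsto_const_nhds
  have hnormσ : ‖σ‖ = (q : ℝ) ^ (-(1 / ((q : ℝ) - 1))) := by
    rw [← Nat.cast_pred (by omega)]
    exact Real.eq_rpow_neg_inv_of_pow_eq_inv (norm_nonneg σ) q.cast_nonneg (by omega)
      (by rw [← norm_pow, hσ, norm_neg, hx])
  have hE0 : E1 ≠ 0 := norm_pos_iff.1 (by rw [hnormE, hnormσ]; positivity)
  have hfe : E1 ^ q = -x * E1 :=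
    pow_eq_mul_of_tendsto hE1 (tendsto_pow_pow_succ_sub_self hxlt hq)
      fun n => carlitz_quotient_pow hD (hbr0 n)
  exact ⟨hfe, hnormE.trans hnormσ, hE0, (pow_sub_one_eq_iff_pow_eq_mul hE0 hq0).2 hfe⟩

/-- the limit `E(1) = lim σ^{q^n}/D_n` satisfies `E(1)^q = -x E(1)`,
and hence (`E(1) ≠ 0`, since `|E(1)| = q^{-1/(q-1)}`) also `E(1)^{q-1} = -x`. -/
theorem dwork_carlitz_special_value_eq {C : Type*} [NormedField C] [CompleteSpace C]
    (hna : IsNonarchimedean (‖·‖ : C → ℝ))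
    (q : ℕ) (p m : ℕ) (hp : p.Prime) (hm : 0 < m) (hqpm : q = p ^ m) (hq : 1 < q)
    (x : C) (hx : ‖x‖ = (q : ℝ)⁻¹)
    (σ : C) (hσ : σ ^ (q - 1) = -x)
    (D : ℕ → C) (hD0 : D 0 = 1)
    (hD : ∀ n : ℕ, D (n + 1) = (x ^ q ^ (n + 1) - x) * (D n) ^ q)
    (E1 : C) (hE1 : Filter.Tendsto (fun n : ℕ => σ ^ q ^ n / D n) Filter.atTop (nhds E1)) :
    E1 ^ q = -x * E1 ∧ ‖E1‖ = (q : ℝ) ^ (-(1 / ((q : ℝ) - 1))) ∧ E1 ≠ 0 ∧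
      E1 ^ (q - 1) = -x :=
  dwork_carlitz_special_value_eq_general hna q hq x hx σ hσ D hD0 hD E1 hE1
end

section
/- The limit E(1) = lim_{n→∞} σ^{q^n}/D_n equals σ itself: any other root ξσ (ξ ∈ 𝔽_q^×, ξ ≠ 1) of z^{q−1} = −x satisfies |ξσ − σ| = q^{−1/(q−1)}, which exceeds the bound sup_{n≥1} |σ^{q^n}/D_n − σ^{q^{n−1}}/D_{n−1}| ≤ q^{−1/(q−1)−(q−1)}; hence E(1) = σ. -/
/-! Put `r n = σ * D n / σ ^ q ^ n`, so that `σ ^ q ^ n / D n = σ / r n`. From `σ ^ q = -x * σ`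
and the recursion for `D`, `r (n + 1) = (1 - x ^ (q ^ (n + 1) - 1)) * r n ^ q`. In characteristic
`p` we have `(1 + δ) ^ q = 1 + δ ^ q`, so the ultrametric inequality gives
`‖r (n + 1) - 1‖ ≤ ε ^ q ^ n` with `ε = ‖x‖ ^ (q - 1) < 1`. Hence `‖r n‖ = 1`, consecutive terms
`σ / r n` are within `‖σ‖ * ε` of each other, and `r n → 1`, so the limit is `σ`.
For the other roots: Frobenius fixes `ξ`, hence `ξ - 1`, so `ξ - 1` is a root of unity and has
norm `1`. -/

open Filter Topology

theorem norm_eq_one_of_pow_eq_one {K : Type*} [NormedDivisionRing K] {y : K} {n : ℕ}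
    (h : y ^ n = 1) (hn : n ≠ 0) : ‖y‖ = 1 :=
  (pow_eq_one_iff_of_nonneg (norm_nonneg y) hn).mp (by rw [← norm_pow, h, norm_one])

theorem norm_div_sub_div_of_norm_eq_one {K : Type*} [NormedField K] (a : K) {b c : K}
    (hb : ‖b‖ = 1) (hc : ‖c‖ = 1) : ‖a / b - a / c‖ = ‖a‖ * ‖c - b‖ := by
  have hb0 : b ≠ 0 := norm_ne_zero_iff.mp (by simp [hb])
  have hc0 : c ≠ 0 := norm_ne_zero_iff.mp (by simp [hc])
  rw [div_sub_div _ _ hb0 hc0, mul_comm b a, ← mul_sub, norm_div, norm_mul, norm_mul, hb, hc]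
  ring

namespace IsUltrametricDist

theorem norm_sub_le_max {S : Type*} [SeminormedAddGroup S] [IsUltrametricDist S] (a b : S) :
    ‖a - b‖ ≤ max ‖a‖ ‖b‖ := by
  simpa only [sub_eq_add_neg, norm_neg] using norm_add_le_max a (-b)

theorem norm_eq_one_of_norm_sub_one_lt_one {R : Type*} [SeminormedRing R] [NormOneClass R]
    [IsUltrametricDist R] {r : R} (h : ‖r - 1‖ < 1) : ‖r‖ = 1 := by
  have := norm_add_eq_max_of_norm_ne_norm (x := 1) (y := r - 1) (by rw [norm_one]; exact h.ne')
  rwa [add_sub_cancel, norm_one, max_eq_left h.le] at this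

theorem norm_div_sub_div_le {K : Type*} [NormedField K] [IsUltrametricDist K] (a : K) {b c : K}
    {ε : ℝ} (hε : ε < 1) (hb : ‖b - 1‖ ≤ ε) (hc : ‖c - 1‖ ≤ ε) : ‖a / b - a / c‖ ≤ ‖a‖ * ε := by
  rw [norm_div_sub_div_of_norm_eq_one a (norm_eq_one_of_norm_sub_one_lt_one (hb.trans_lt hε))
    (norm_eq_one_of_norm_sub_one_lt_one (hc.trans_lt hε)), ← sub_sub_sub_cancel_right c b 1]
  exact mul_le_mul_of_nonneg_left ((norm_sub_le_max _ _).trans (max_le hc hb)) (norm_nonneg a)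

end IsUltrametricDist

section Frobenius

variable {K : Type*} {p : ℕ}

theorem sub_one_pow_eq_one_of_pow_eq_one [Field K] [ExpChar K p] {m : ℕ} {ξ : K}
    (hξ : ξ ^ (p ^ m - 1) = 1) (hξ1 : ξ ≠ 1) : (ξ - 1) ^ (p ^ m - 1) = 1 := by
  have hq : p ^ m ≠ 0 := pow_ne_zero m (expChar_pos K p).ne'
  have hfix : (ξ - 1) ^ (p ^ m - 1) * (ξ - 1) = 1 * (ξ - 1) := by
    rw [pow_sub_one_mul hq, sub_pow_expChar_pow, one_pow, ← pow_sub_one_mul hq, hξ, one_mul,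
      one_mul]
  exact mul_right_cancel₀ (sub_ne_zero.mpr hξ1) hfix

variable [NormedField K] [ExpChar K p] [IsUltrametricDist K]

theorem norm_one_sub_mul_one_add_pow_sub_one_le (m : ℕ) {δ t : K} (hδ : ‖δ‖ ≤ 1) :
    ‖(1 - t) * (1 + δ) ^ p ^ m - 1‖ ≤ max (‖δ‖ ^ p ^ m) ‖t‖ := by
  have h1δ : ‖1 + δ ^ p ^ m‖ ≤ 1 :=
    (IsUltrametricDist.norm_add_le_max _ _).trans
      (max_le norm_one.le (by rw [norm_pow]; exact pow_le_one₀ (norm_nonneg δ) hδ))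
  have key : (1 - t) * (1 + δ) ^ p ^ m - 1 = δ ^ p ^ m - t * (1 + δ ^ p ^ m) := by
    rw [add_pow_expChar_pow, one_pow]; ring
  rw [key]
  refine (IsUltrametricDist.norm_sub_le_max _ _).trans (max_le_max (norm_pow δ _).le ?_)
  rw [norm_mul]
  exact mul_le_of_le_one_right (norm_nonneg t) h1δ

theorem norm_sub_one_le_of_frobenius_recursion {m : ℕ} {ε : ℝ} (hε₀ : 0 ≤ ε) (hε₁ : ε ≤ 1)
    {r t : ℕ → K} (hr₀ : r 0 = 1) (hr : ∀ n, r (n + 1) = (1 - t n) * r n ^ p ^ m)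
    (ht : ∀ n, ‖t n‖ ≤ ε ^ (p ^ m) ^ n) (n : ℕ) : ‖r (n + 1) - 1‖ ≤ ε ^ (p ^ m) ^ n := by
  induction n with
  | zero => simpa [hr, hr₀] using ht 0
  | succ k ih =>
    have hδ : ‖r (k + 1) - 1‖ ≤ 1 := ih.trans (pow_le_one₀ hε₀ hε₁)
    rw [hr (k + 1), ← add_sub_cancel 1 (r (k + 1))]
    refine (norm_one_sub_mul_one_add_pow_sub_one_le m hδ).trans (max_le ?_ (ht _))
    rw [pow_succ, pow_mul]
    exact pow_le_pow_left₀ (norm_nonneg _) ih _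

end Frobenius

theorem pow_pow_succ_sub_one_le {a : ℝ} (ha₀ : 0 ≤ a) (ha₁ : a ≤ 1) (q n : ℕ) :
    a ^ (q ^ (n + 1) - 1) ≤ (a ^ (q - 1)) ^ q ^ n := by
  rw [← pow_mul]
  refine pow_le_pow_of_le_one ha₀ ha₁ ?_
  rw [pow_succ, Nat.sub_mul, one_mul, mul_comm q]
  rcases Nat.eq_zero_or_pos (q ^ n) with h | h
  · simp [h]
  · omega

theorem tendsto_of_norm_sub_le_pow_pow {E : Type*} [SeminormedAddCommGroup E] {r : ℕ → E} {a : E}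
    {ε : ℝ} (hε₀ : 0 ≤ ε) (hε₁ : ε < 1) {q : ℕ} (hq : 1 < q)
    (hr : ∀ n, ‖r (n + 1) - a‖ ≤ ε ^ q ^ n) : Tendsto r atTop (𝓝 a) := by
  rw [← tendsto_add_atTop_iff_nat 1, tendsto_iff_norm_sub_tendsto_zero]
  exact squeeze_zero (fun _ => norm_nonneg _) hr
    ((tendsto_pow_atTop_nhds_zero_of_lt_one hε₀ hε₁).comp (tendsto_pow_atTop_atTop_of_one_lt hq))

theorem carlitz_ratio_succ {K : Type*} [Field K] {q : ℕ} (hq : q ≠ 0) {x σ : K} (hσ0 : σ ≠ 0)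
    (hσ : σ ^ (q - 1) = -x) {D : ℕ → K} (hD : ∀ n, D (n + 1) = (x ^ q ^ (n + 1) - x) * D n ^ q)
    (n : ℕ) :
    σ * D (n + 1) / σ ^ q ^ (n + 1) = (1 - x ^ (q ^ (n + 1) - 1)) * (σ * D n / σ ^ q ^ n) ^ q := by
  have hσq : σ ^ q = -x * σ := by rw [← pow_sub_one_mul hq, hσ]
  have hxq : x ^ q ^ (n + 1) = x * x ^ (q ^ (n + 1) - 1) :=
    (mul_pow_sub_one (pow_ne_zero _ hq) x).symm
  rw [hD, hxq, div_pow, mul_pow, hσq, ← pow_mul, ← pow_succ]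
  field_simp
  ring

theorem norm_carlitz_ratio_sub_one_le {K : Type*} [NormedField K] [IsUltrametricDist K] {p : ℕ}
    [ExpChar K p] {m : ℕ} {x σ : K} (hx : ‖x‖ ≤ 1) (hσ0 : σ ≠ 0) (hσ : σ ^ (p ^ m - 1) = -x)
    {D : ℕ → K} (hD0 : D 0 = 1)
    (hD : ∀ n, D (n + 1) = (x ^ (p ^ m) ^ (n + 1) - x) * D n ^ p ^ m) (n : ℕ) :
    ‖σ * D (n + 1) / σ ^ (p ^ m) ^ (n + 1) - 1‖ ≤ (‖x‖ ^ (p ^ m - 1)) ^ (p ^ m) ^ n :=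
  norm_sub_one_le_of_frobenius_recursion (r := fun n => σ * D n / σ ^ (p ^ m) ^ n)
    (t := fun n => x ^ ((p ^ m) ^ (n + 1) - 1)) (by positivity) (pow_le_one₀ (norm_nonneg x) hx)
    (by simp [hD0, hσ0]) (carlitz_ratio_succ (pow_ne_zero m (expChar_pos K p).ne') hσ0 hσ hD)
    (fun n => by rw [norm_pow]; exact pow_pow_succ_sub_one_le (norm_nonneg x) hx _ n) n

theorem norm_eq_rpow_of_pow_sub_one_eq_neg {K : Type*} [NormedField K] {q : ℕ} (hq : 1 < q)
    {x σ : K} (hx : ‖x‖ = (q : ℝ)⁻¹) (hσ : σ ^ (q - 1) = -x) :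
    ‖σ‖ = (q : ℝ) ^ (-(1 / ((q : ℝ) - 1))) := by
  have hpow : ‖σ‖ ^ (q - 1) = (q : ℝ)⁻¹ := by rw [← norm_pow, hσ, norm_neg, hx]
  rw [← Real.pow_rpow_inv_natCast (norm_nonneg σ) (by omega : q - 1 ≠ 0), hpow,
    Nat.cast_sub hq.le, Nat.cast_one, Real.inv_rpow (Nat.cast_nonneg q),
    ← Real.rpow_neg (Nat.cast_nonneg q), one_div]

theorem rpow_neg_one_div_sub_one_sub {q : ℕ} (hq : 1 < q) :
    (q : ℝ) ^ (-(1 / ((q : ℝ) - 1)) - ((q : ℝ) - 1)) =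
      (q : ℝ) ^ (-(1 / ((q : ℝ) - 1))) * ((q : ℝ)⁻¹) ^ (q - 1) := by
  rw [Real.rpow_sub (by positivity), inv_pow, ← Real.rpow_natCast, Nat.cast_sub hq.le,
    Nat.cast_one, div_eq_mul_inv]

theorem dwork_carlitz_special_value_is_sigma_general {C : Type*} [NormedField C]
    (hna : IsNonarchimedean (‖·‖ : C → ℝ))
    (q : ℕ) (p m : ℕ) (hp : p.Prime) (hqpm : q = p ^ m) (hq : 1 < q)
    [CharP C p]
    (x : C) (hx : ‖x‖ = (q : ℝ)⁻¹)
    (σ : C) (hσ : σ ^ (q - 1) = -x)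
    (D : ℕ → C) (hD0 : D 0 = 1)
    (hD : ∀ n : ℕ, D (n + 1) = (x ^ q ^ (n + 1) - x) * (D n) ^ q)
    (E1 : C) (hE1 : Filter.Tendsto (fun n : ℕ => σ ^ q ^ n / D n) Filter.atTop (nhds E1)) :
    (∀ ξ : C, ξ ^ (q - 1) = 1 → ξ ≠ 1 →
        ‖ξ * σ - σ‖ = (q : ℝ) ^ (-(1 / ((q : ℝ) - 1)))) ∧
    (∀ n : ℕ, 1 ≤ n →
        ‖σ ^ q ^ n / D n - σ ^ q ^ (n - 1) / D (n - 1)‖ ≤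
          (q : ℝ) ^ (-(1 / ((q : ℝ) - 1)) - ((q : ℝ) - 1))) ∧
    E1 = σ := by
  have hσnorm := norm_eq_rpow_of_pow_sub_one_eq_neg hq hx hσ
  have hσ0 : σ ≠ 0 := norm_ne_zero_iff.mp (hσnorm ▸ (Real.rpow_pos_of_pos (by positivity) _).ne')
  have hx1 : ‖x‖ < 1 := hx ▸ inv_lt_one_of_one_lt₀ (by exact_mod_cast hq)
  have hε : ‖x‖ ^ (q - 1) < 1 := pow_lt_one₀ (norm_nonneg x) hx1 (by omega)
  rw [rpow_neg_one_div_sub_one_sub hq, ← hσnorm, ← hx]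
  subst hqpm
  have := IsUltrametricDist.isUltrametricDist_of_isNonarchimedean_norm hna
  have := ExpChar.prime (R := C) hp
  set r : ℕ → C := fun n => σ * D n / σ ^ (p ^ m) ^ n
  have hr := norm_carlitz_ratio_sub_one_le hx1.le hσ0 hσ hD0 hD
  have hr_le : ∀ n, ‖r n - 1‖ ≤ ‖x‖ ^ (p ^ m - 1)
    | 0 => by simp [r, hD0, hσ0]
    | k + 1 => (hr k).trans (pow_le_of_le_one (by positivity) hε.le (by positivity))
  have hu : ∀ n, σ ^ (p ^ m) ^ n / D n = σ / r n := fun n => by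
    rw [div_div_eq_mul_div, mul_div_mul_left _ _ hσ0]
  refine ⟨fun ξ hξ hξ1 => ?_, fun n hn => ?_, ?_⟩
  · rw [← sub_one_mul, norm_mul,
      norm_eq_one_of_pow_eq_one (sub_one_pow_eq_one_of_pow_eq_one hξ hξ1) (by omega), one_mul]
  · obtain ⟨k, rfl⟩ := Nat.exists_eq_add_of_le' hn
    rw [Nat.add_sub_cancel, hu, hu]
    exact IsUltrametricDist.norm_div_sub_div_le σ hε (hr_le _) (hr_le _)
  · have hr_lim : Tendsto r atTop (𝓝 1) := tendsto_of_norm_sub_le_pow_pow (by positivity) hε hq hr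
    refine tendsto_nhds_unique hE1 ?_
    simpa [hu, Pi.div_def] using tendsto_const_nhds.div hr_lim one_ne_zero

/-- `E(1) = lim σ^{q^n}/D_n` equals `σ`: any other root `ξσ`
(`ξ ∈ 𝔽_q^×`, i.e. `ξ^{q-1} = 1`, `ξ ≠ 1`) of `z^{q-1} = -x` satisfies
`|ξσ - σ| = q^{-1/(q-1)}`, which exceeds the bound
`sup_{n ≥ 1} |σ^{q^n}/D_n - σ^{q^{n-1}}/D_{n-1}| ≤ q^{-1/(q-1)-(q-1)}`;
hence `E(1) = σ`. -/
theorem dwork_carlitz_special_value_is_sigma {C : Type*} [NormedField C] [CompleteSpace C]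
    (hna : IsNonarchimedean (‖·‖ : C → ℝ))
    (q : ℕ) (p m : ℕ) (hp : p.Prime) (hm : 0 < m) (hqpm : q = p ^ m) (hq : 1 < q)
    [CharP C p]
    (x : C) (hx : ‖x‖ = (q : ℝ)⁻¹)
    (σ : C) (hσ : σ ^ (q - 1) = -x)
    (D : ℕ → C) (hD0 : D 0 = 1)
    (hD : ∀ n : ℕ, D (n + 1) = (x ^ q ^ (n + 1) - x) * (D n) ^ q)
    (E1 : C) (hE1 : Filter.Tendsto (fun n : ℕ => σ ^ q ^ n / D n) Filter.atTop (nhds E1)) :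
    (∀ ξ : C, ξ ^ (q - 1) = 1 → ξ ≠ 1 →
        ‖ξ * σ - σ‖ = (q : ℝ) ^ (-(1 / ((q : ℝ) - 1)))) ∧
    (∀ n : ℕ, 1 ≤ n →
        ‖σ ^ q ^ n / D n - σ ^ q ^ (n - 1) / D (n - 1)‖ ≤
          (q : ℝ) ^ (-(1 / ((q : ℝ) - 1)) - ((q : ℝ) - 1))) ∧
    E1 = σ :=
  dwork_carlitz_special_value_is_sigma_general hna q p m hp hqpm hq x hx σ hσ D hD0 hD E1 hE1
end

section
/- Fix n ≥ 1. The series L_n(t) = t^q/[1]^n + Σ_{j≥2} (1/[j]^n − 1/[j−1]^n) t^{q^j} converges for every t in the completion of the algebraic closure of K with |t| < q^{1/q}; in particular the series L_n, a formal difference of the polylogarithm l_n(t) = Σ_{j≥1} t^{q^j}/[j]^n at t and t^q, overconverges beyond the unit disk. -/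
/-!
Since `‖x‖ = q⁻¹ < 1`, the ultrametric inequality gives `‖[j]‖ = ‖x‖` for `j ≥ 1` and
`‖[j] - [j-1]‖ = ‖x^{q^j} - x^{q^{j-1}}‖ = ‖x‖^{q^{j-1}}`, so the `j`-th coefficient has norm at most
`‖x‖^{q^{j-1}} / ‖x‖^{n+1}` and the `j`-th term at most `(‖x‖ ‖t‖^q)^{q^{j-1}} / ‖x‖^{n+1}`.
This tends to `0` exactly when `‖t‖^q < q`, i.e. `‖t‖ < q^{1/q}`, and in a complete ultrametric
field a series whose terms tend to `0` converges.
-/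

open Filter Topology Finset

theorem exists_tendsto_sum_Icc_of_tendsto_zero {E : Type*} [NormedAddCommGroup E]
    [IsUltrametricDist E] [CompleteSpace E] {f : ℕ → E} (hf : Tendsto f atTop (𝓝 0)) (a : ℕ) :
    ∃ L, Tendsto (fun N => ∑ j ∈ Icc a N, f j) atTop (𝓝 L) := by
  obtain ⟨L, hL⟩ := NonarchimedeanAddGroup.summable_of_tendsto_cofinite_zero
    (Nat.cofinite_eq_atTop ▸ (tendsto_add_atTop_iff_nat a).mpr hf)
  refine ⟨L, (tendsto_add_atTop_iff_nat a).mp ?_⟩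
  simp_rw [← Ico_add_one_right_eq_Icc, sum_Ico_eq_sum_range, add_comm a]
  simp only [Nat.add_right_comm _ a 1, Nat.add_sub_cancel]
  exact hL.tendsto_sum_nat.comp (tendsto_add_atTop_nat 1)

section Ultrametric

variable {K : Type*} [NormedField K] [IsUltrametricDist K]

theorem norm_pow_sub_pow_of_lt {x : K} (hx0 : 0 < ‖x‖) (hx1 : ‖x‖ < 1) {a b : ℕ} (hab : a < b) :
    ‖x ^ b - x ^ a‖ = ‖x‖ ^ a := by
  have hlt : ‖x‖ ^ b < ‖x‖ ^ a := pow_lt_pow_right_of_lt_one₀ hx0 hx1 hab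
  rw [sub_eq_neg_add, IsUltrametricDist.norm_add_eq_max_of_norm_ne_norm (by simpa using hlt.ne'),
    norm_neg, norm_pow, norm_pow, max_eq_left hlt.le]

theorem norm_pow_succ_sub_pow_succ_le {a b : K} {r : ℝ} (ha : ‖a‖ ≤ r) (hb : ‖b‖ ≤ r) (n : ℕ) :
    ‖a ^ (n + 1) - b ^ (n + 1)‖ ≤ ‖a - b‖ * r ^ n := by
  have hr : 0 ≤ r := (norm_nonneg a).trans ha
  rw [← geom_sum₂_mul, norm_mul, mul_comm]
  gcongr
  refine IsUltrametricDist.norm_sum_le_of_forall_le_of_nonneg (by positivity) fun i hi => ?_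
  rw [mem_range] at hi
  calc ‖a ^ i * b ^ (n + 1 - 1 - i)‖ ≤ r ^ i * r ^ (n - i) := by
        rw [norm_mul, norm_pow, norm_pow, Nat.add_sub_cancel]; gcongr
    _ = r ^ n := by rw [← pow_add, Nat.add_sub_cancel' (by omega)]

theorem norm_one_div_pow_sub_one_div_pow_le {a b : K} (ha : a ≠ 0) (hab : ‖a‖ = ‖b‖) (n : ℕ) :
    ‖1 / a ^ n - 1 / b ^ n‖ ≤ ‖a - b‖ / ‖a‖ ^ (n + 1) := by
  have hb : b ≠ 0 := norm_ne_zero_iff.mp (hab ▸ norm_ne_zero_iff.mpr ha)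
  have ha' : 0 < ‖a‖ := norm_pos_iff.mpr ha
  cases n with
  | zero => simp only [pow_zero, sub_self, norm_zero]; positivity
  | succ n =>
    have hinv : ‖a⁻¹ - b⁻¹‖ = ‖a - b‖ / ‖a‖ ^ 2 := by
      rw [inv_sub_inv ha hb, norm_div, norm_mul, ← hab, norm_sub_rev, sq]
    calc ‖1 / a ^ (n + 1) - 1 / b ^ (n + 1)‖ = ‖a⁻¹ ^ (n + 1) - b⁻¹ ^ (n + 1)‖ := by
          simp only [one_div, inv_pow]
      _ ≤ ‖a⁻¹ - b⁻¹‖ * ‖a‖⁻¹ ^ n :=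
          norm_pow_succ_sub_pow_succ_le (norm_inv a).le (by rw [norm_inv, hab]) n
      _ = ‖a - b‖ / ‖a‖ ^ (n + 1 + 1) := by
          rw [hinv, inv_pow]; field_simp; ring

theorem norm_one_div_pow_sub_self_sub_le {x : K} (hx0 : 0 < ‖x‖) (hx1 : ‖x‖ < 1) {a b : ℕ}
    (ha : 1 < a) (hab : a < b) (n : ℕ) :
    ‖1 / (x ^ b - x) ^ n - 1 / (x ^ a - x) ^ n‖ ≤ ‖x‖ ^ a / ‖x‖ ^ (n + 1) := by
  have hb : ‖x ^ b - x‖ = ‖x‖ := by simpa using norm_pow_sub_pow_of_lt hx0 hx1 (ha.trans hab)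
  have ha' : ‖x ^ a - x‖ = ‖x‖ := by simpa using norm_pow_sub_pow_of_lt hx0 hx1 ha
  have hb0 : x ^ b - x ≠ 0 := norm_pos_iff.mp (hb ▸ hx0)
  calc _ ≤ ‖(x ^ b - x) - (x ^ a - x)‖ / ‖x ^ b - x‖ ^ (n + 1) :=
        norm_one_div_pow_sub_one_div_pow_le hb0 (hb.trans ha'.symm) n
    _ = ‖x‖ ^ a / ‖x‖ ^ (n + 1) := by
        rw [sub_sub_sub_cancel_right, norm_pow_sub_pow_of_lt hx0 hx1 hab, hb]

theorem polylog_difference_term_tendsto_zero {x t : K}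
    (hx0 : 0 < ‖x‖) (hx1 : ‖x‖ < 1) {q : ℕ} (hq : 1 < q) (ht : ‖x‖ * ‖t‖ ^ q < 1) (n : ℕ) :
    Tendsto (fun j => (1 / (x ^ q ^ j - x) ^ n - 1 / (x ^ q ^ (j - 1) - x) ^ n) * t ^ q ^ j)
      atTop (𝓝 0) := by
  set s := ‖x‖ * ‖t‖ ^ q
  have hbound : ∀ j ≥ 2, ‖(1 / (x ^ q ^ j - x) ^ n - 1 / (x ^ q ^ (j - 1) - x) ^ n) * t ^ q ^ j‖
      ≤ s ^ q ^ (j - 1) / ‖x‖ ^ (n + 1) := by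
    intro j hj
    have hqj : q ^ j = q * q ^ (j - 1) := by rw [← pow_succ', Nat.sub_add_cancel (by omega)]
    calc _ ≤ ‖x‖ ^ q ^ (j - 1) / ‖x‖ ^ (n + 1) * ‖t‖ ^ q ^ j := by
          rw [norm_mul, norm_pow]
          gcongr
          exact norm_one_div_pow_sub_self_sub_le hx0 hx1 (Nat.one_lt_pow (by omega) hq)
            (Nat.pow_lt_pow_right hq (by omega)) n
      _ = s ^ q ^ (j - 1) / ‖x‖ ^ (n + 1) := by
          rw [hqj, pow_mul, mul_pow]; ring
  have hs : Tendsto (fun j => s ^ q ^ (j - 1)) atTop (𝓝 0) :=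
    (tendsto_pow_atTop_nhds_zero_of_lt_one (by positivity) ht).comp
      ((tendsto_pow_atTop_atTop_of_one_lt hq).comp (tendsto_sub_atTop_nat 1))
  exact squeeze_zero_norm' (eventually_atTop.mpr ⟨2, hbound⟩) (by simpa using hs.div_const _)

end Ultrametric

theorem polylog_overconvergence_general {C : Type*} [NormedField C] [CompleteSpace C]
    (hna : IsNonarchimedean (‖·‖ : C → ℝ))
    (q : ℕ) (hq : 1 < q)
    (x : C) (hx : ‖x‖ = (q : ℝ)⁻¹)
    (n : ℕ) :
    ∀ t : C, ‖t‖ < (q : ℝ) ^ (1 / (q : ℝ)) →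
      ∃ L : C, Filter.Tendsto
        (fun N : ℕ => t ^ q / (x ^ q - x) ^ n +
          ∑ j ∈ Finset.Icc 2 N,
            (1 / (x ^ q ^ j - x) ^ n - 1 / (x ^ q ^ (j - 1) - x) ^ n) * t ^ q ^ j)
        Filter.atTop (nhds L) := by
  intro t ht
  have : IsUltrametricDist C := .isUltrametricDist_of_isNonarchimedean_norm hna
  have hq' : (1 : ℝ) < q := by exact_mod_cast hq
  have hx0 : 0 < ‖x‖ := hx ▸ by positivity
  have hx1 : ‖x‖ < 1 := hx ▸ inv_lt_one_of_one_lt₀ hq'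
  have htq : ‖t‖ ^ q < q := by
    rwa [one_div, Real.lt_rpow_inv_iff_of_pos (norm_nonneg t) (by positivity) (by positivity),
      Real.rpow_natCast] at ht
  have hxt : ‖x‖ * ‖t‖ ^ q < 1 := by rwa [hx, inv_mul_lt_one₀ (by positivity)]
  obtain ⟨L, hL⟩ :=
    exists_tendsto_sum_Icc_of_tendsto_zero (polylog_difference_term_tendsto_zero hx0 hx1 hq hxt n) 2
  exact ⟨_, hL.const_add _⟩

/-- fix `n ≥ 1`. The series
`L_n(t) = t^q/[1]^n + Σ_{j≥2} (1/[j]^n - 1/[j-1]^n) t^{q^j}` (the formal difference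
`l_n(t) - l_n(t^q)` of polylogarithms) converges for every `t` with `|t| < q^{1/q}`,
so it overconverges beyond the unit disk. -/
theorem polylog_overconvergence {C : Type*} [NormedField C] [CompleteSpace C]
    (hna : IsNonarchimedean (‖·‖ : C → ℝ))
    (q : ℕ) (p m : ℕ) (hp : p.Prime) (hm : 0 < m) (hqpm : q = p ^ m) (hq : 1 < q)
    (x : C) (hx : ‖x‖ = (q : ℝ)⁻¹)
    (n : ℕ) (hn : 1 ≤ n) :
    ∀ t : C, ‖t‖ < (q : ℝ) ^ (1 / (q : ℝ)) →
      ∃ L : C, Filter.Tendsto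
        (fun N : ℕ => t ^ q / (x ^ q - x) ^ n +
          ∑ j ∈ Finset.Icc 2 N,
            (1 / (x ^ q ^ j - x) ^ n - 1 / (x ^ q ^ (j - 1) - x) ^ n) * t ^ q ^ j)
        Filter.atTop (nhds L) :=
  polylog_overconvergence_general hna q hq x hx n
end

section
/- For all a, b, c with |a| = |b| = |c| = 1 (and all quantities defined), the hypergeometric function satisfies the identity F(T_1(a),T_1(b);T_1(c); (ab/c)·t)^q − x·F(a,b;c;t) = −F(a,b;c;xt) wherever all three series converge; as formal identities of the coefficients of t^{q^n}, this amounts to: ⟨T_1(a)⟩_{n−1}^q⟨T_1(b)⟩_{n−1}^q / (⟨T_1(c)⟩_{n−1}^q D_{n−1}^q) · (ab/c)^{q^n} = −[n]·⟨a⟩_n⟨b⟩_n/(⟨c⟩_n D_n) for n ≥ 1. -/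
/-!
The `q`-power map is additive in characteristic `p`, so it shifts Carlitz brackets:
`([i] - T_1(a))^q = x^{q^{i+1}} - x^q - (a - [1]) = [i+1] - a`. Peeling off the `i = 0` factor
`(-a)^{q^n}` therefore gives `⟨a⟩_n = -a^{q^n} ⟨T_1(a)⟩_{n-1}^q`. Substituting this for `a`, `b`,
`c` and `D_n = [n] D_{n-1}^q`, the three signs and the factor `[n]` cancel; `[n] ≠ 0` because
`‖x^{q^n}‖ < ‖x‖`.
-/

open Finset

/-- `⟨a⟩_n = ∏_{i<n} ([i] - a)^{q^{n-i}}` with `[i] = x^{q^i} - x`. -/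
def carlitzPochhammer {R : Type*} [CommRing R] (q : ℕ) (x a : R) (n : ℕ) : R :=
  ∏ i ∈ range n, ((x ^ q ^ i - x) - a) ^ q ^ (n - i)

section
variable {R : Type*} [CommRing R] {p : ℕ} [ExpChar R p] (m : ℕ)

lemma neg_pow_expChar_pow_pow (u : R) (k : ℕ) : (-u) ^ (p ^ m) ^ k = -u ^ (p ^ m) ^ k := by
  rw [neg_pow, ← pow_mul, neg_one_pow_expChar_pow, neg_one_mul]

lemma carlitzPochhammer_succ (x : R) {u Tu : R} (hTu : Tu ^ p ^ m = u - (x ^ p ^ m - x))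
    (k : ℕ) :
    carlitzPochhammer (p ^ m) x u (k + 1) =
      -u ^ (p ^ m) ^ (k + 1) * carlitzPochhammer (p ^ m) x Tu k ^ p ^ m := by
  have hfrob (i : ℕ) :
      ((x ^ (p ^ m) ^ i - x) - Tu) ^ p ^ m = (x ^ (p ^ m) ^ (i + 1) - x) - u := by
    rw [sub_pow_expChar_pow, sub_pow_expChar_pow, hTu, ← pow_mul, ← pow_succ]
    ring
  have hfactor (i : ℕ) (_ : i ∈ range k) :
      ((x ^ (p ^ m) ^ (i + 1) - x) - u) ^ (p ^ m) ^ (k + 1 - (i + 1)) =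
        (((x ^ (p ^ m) ^ i - x) - Tu) ^ (p ^ m) ^ (k - i)) ^ p ^ m := by
    rw [Nat.add_sub_add_right, ← hfrob, pow_right_comm]
  rw [carlitzPochhammer, carlitzPochhammer, prod_range_succ', prod_congr rfl hfactor, prod_pow,
    pow_zero, pow_one, sub_self, zero_sub, Nat.sub_zero, neg_pow_expChar_pow_pow, mul_comm]
end

lemma pow_ne_self_of_norm_lt_one {K : Type*} [NormedDivisionRing K] {x : K} (h0 : x ≠ 0)
    (h1 : ‖x‖ < 1) {N : ℕ} (hN : 1 < N) : x ^ N ≠ x := fun h =>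
  (pow_lt_self_of_lt_one₀ (norm_pos_iff.2 h0) h1 hN).ne (by rw [← norm_pow, h])

theorem hypergeometric_frobenius_identity_general {C : Type*} [NormedField C]
    (q : ℕ) (p m : ℕ) (hp : p.Prime) (hqpm : q = p ^ m) (hq : 1 < q)
    [CharP C p]
    (x : C) (hx : ‖x‖ = (q : ℝ)⁻¹)
    (D : ℕ → C)
    (hD : ∀ n : ℕ, D (n + 1) = (x ^ q ^ (n + 1) - x) * (D n) ^ q)
    (P : C → ℕ → C)
    (hP : ∀ a : C, ∀ n : ℕ,
      P a n = ∏ i ∈ Finset.range n, ((x ^ q ^ i - x) - a) ^ q ^ (n - i))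
    (a b c Ta Tb Tc : C)
    (hTa : Ta ^ q = a - (x ^ q - x)) (hTb : Tb ^ q = b - (x ^ q - x))
    (hTc : Tc ^ q = c - (x ^ q - x)) :
    ∀ n : ℕ, 1 ≤ n →
      (P Ta (n - 1)) ^ q * (P Tb (n - 1)) ^ q / ((P Tc (n - 1)) ^ q * (D (n - 1)) ^ q) *
          (a * b / c) ^ q ^ n =
        -(x ^ q ^ n - x) * (P a n * P b n / (P c n * D n)) := by
  have := Fact.mk hp
  have hq_pos : (0 : ℝ) < q := by exact_mod_cast zero_lt_one.trans hq
  have hx0 : x ≠ 0 := norm_pos_iff.1 (hx ▸ inv_pos.2 hq_pos)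
  have hx1 : ‖x‖ < 1 := hx ▸ inv_lt_one_of_one_lt₀ (by exact_mod_cast hq)
  subst hqpm
  obtain rfl : P = carlitzPochhammer (p ^ m) x := funext fun a => funext (hP a)
  intro n hn
  obtain ⟨k, rfl⟩ := Nat.exists_eq_add_of_le' hn
  have hbracket : x ^ (p ^ m) ^ (k + 1) - x ≠ 0 :=
    sub_ne_zero.2 (pow_ne_self_of_norm_lt_one hx0 hx1 (Nat.one_lt_pow k.succ_ne_zero hq))
  rw [Nat.add_sub_cancel, carlitzPochhammer_succ m x hTa, carlitzPochhammer_succ m x hTb,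
    carlitzPochhammer_succ m x hTc, hD k]
  field_simp
  ring

/-- the hypergeometric identity
`F(T_1(a),T_1(b);T_1(c);(ab/c)t)^q - x F(a,b;c;t) = -F(a,b;c;xt)` holds at the level
of coefficients of `t^{q^n}`: for `n ≥ 1`,
`⟨T_1(a)⟩_{n-1}^q ⟨T_1(b)⟩_{n-1}^q / (⟨T_1(c)⟩_{n-1}^q D_{n-1}^q) · (ab/c)^{q^n}
  = -[n] · ⟨a⟩_n⟨b⟩_n/(⟨c⟩_n D_n)`,
where `T_1(a)^q = a - [1]`, etc., and `c`, all `⟨c⟩_n` and `⟨T_1(c)⟩_n` are nonzero. -/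
theorem hypergeometric_frobenius_identity {C : Type*} [NormedField C]
    (hna : IsNonarchimedean (‖·‖ : C → ℝ))
    (q : ℕ) (p m : ℕ) (hp : p.Prime) (hm : 0 < m) (hqpm : q = p ^ m) (hq : 1 < q)
    [CharP C p]
    (x : C) (hx : ‖x‖ = (q : ℝ)⁻¹)
    (D : ℕ → C) (hD0 : D 0 = 1)
    (hD : ∀ n : ℕ, D (n + 1) = (x ^ q ^ (n + 1) - x) * (D n) ^ q)
    (P : C → ℕ → C)
    (hP : ∀ a : C, ∀ n : ℕ,
      P a n = ∏ i ∈ Finset.range n, ((x ^ q ^ i - x) - a) ^ q ^ (n - i))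
    (a b c Ta Tb Tc : C)
    (ha : ‖a‖ = 1) (hb : ‖b‖ = 1) (hc : ‖c‖ = 1)
    (hTa : Ta ^ q = a - (x ^ q - x)) (hTb : Tb ^ q = b - (x ^ q - x))
    (hTc : Tc ^ q = c - (x ^ q - x))
    (hc0 : c ≠ 0) (hPc : ∀ n : ℕ, P c n ≠ 0) (hPTc : ∀ n : ℕ, P Tc n ≠ 0) :
    ∀ n : ℕ, 1 ≤ n →
      (P Ta (n - 1)) ^ q * (P Tb (n - 1)) ^ q / ((P Tc (n - 1)) ^ q * (D (n - 1)) ^ q) *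
          (a * b / c) ^ q ^ n =
        -(x ^ q ^ n - x) * (P a n * P b n / (P c n * D n)) :=
  hypergeometric_frobenius_identity_general q p m hp hqpm hq x hx D hD P hP a b c Ta Tb Tc hTa hTb
    hTc
end
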